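/- arXiv:2502.16039 — 2 statements merged into one kernel-verified Lean document; each statement's English description precedes it below -/
import Mathlib

section
/- Let n ≥ 2 be an integer and p > 0. Let f : [0,∞) × (0,∞) → (0,∞) be continuous and let u be a positive C¹ solution of the integral equation (IE). Then for every x ∈ ℝⁿ, every λ > 0, and every ξ ∈ ℝⁿ with ξ ≠ x and ξ^{x,λ} ≠ 0, one has u_{x,λ}(ξ) = ∫_{ℝⁿ} λ^{p+2n} |ξ−z|^p |z−x|^{−(p+2n)} f(|z^{x,λ}|, u(z^{x,λ})) dz. -/
open MeasureTheory Module

noncomputable section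

/-- Inversion of `ξ` about the sphere of radius `l` centered at `x`. -/
def inversion {n : ℕ} (x : EuclideanSpace ℝ (Fin n)) (l : ℝ)
    (ξ : EuclideanSpace ℝ (Fin n)) : EuclideanSpace ℝ (Fin n) :=
  x + (l ^ 2 / ‖ξ - x‖ ^ 2) • (ξ - x)

/-- Kelvin-type transform of `u` about the sphere of radius `l` centered at `x`. -/
def kelvin {n : ℕ} (p : ℝ) (u : EuclideanSpace ℝ (Fin n) → ℝ)
    (x : EuclideanSpace ℝ (Fin n)) (l : ℝ) (ξ : EuclideanSpace ℝ (Fin n)) : ℝ :=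
  (‖ξ - x‖ / l) ^ p * u (inversion x l ξ)

/-!
Substitute `y = z^{x,λ}` in (IE) at the point `ξ^{x,λ}`. The inversion is an involution of
`ℝⁿ ∖ {x}` whose derivative at `z` is `(λ / |z - x|)²` times a reflection, so its Jacobian is
`(λ / |z - x|)^{2n}`; together with `|ξ^{x,λ} - z^{x,λ}| = λ² |ξ - z| / (|ξ - x| |z - x|)` the
powers of `λ`, `|ξ - x|` and `|z - x|` collapse to the stated kernel.
-/

lemma inversion_eq_euclideanGeometry_inversion {n : ℕ} (x : EuclideanSpace ℝ (Fin n)) (l : ℝ)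
    (ξ : EuclideanSpace ℝ (Fin n)) :
    inversion x l ξ = EuclideanGeometry.inversion x l ξ := by
  simp only [inversion, EuclideanGeometry.inversion_def, dist_eq_norm, div_pow,
    vsub_eq_sub, vadd_eq_add]
  abel

section ChangeOfVariables

variable {E : Type*} [NormedAddCommGroup E] [InnerProductSpace ℝ E] [FiniteDimensional ℝ E]

lemma abs_det_fderiv_inversion (c z : E) (R : ℝ) :
    |((R / dist z c) ^ 2 • ((ℝ ∙ (z - c))ᗮ.reflection : E →L[ℝ] E)).det| =
      ((R / dist z c) ^ 2) ^ finrank ℝ E := by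
  have hrefl : LinearMap.det ((ℝ ∙ (z - c))ᗮ.reflection : E →L[ℝ] E).toLinearMap =
      (-1) ^ finrank ℝ (ℝ ∙ (z - c))ᗮᗮ :=
    Submodule.det_reflection _
  rw [ContinuousLinearMap.det, ContinuousLinearMap.toLinearMap_smul, LinearMap.det_smul, hrefl,
    abs_mul, abs_neg_one_pow, mul_one, abs_of_nonneg (by positivity)]

open EuclideanGeometry in
lemma integral_eq_integral_comp_inversion {F : Type*} [NormedAddCommGroup F] [NormedSpace ℝ F]
    [Nontrivial E] [MeasurableSpace E] [BorelSpace E] (μ : Measure E) [μ.IsAddHaarMeasure]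
    (c : E) {R : ℝ} (hR : R ≠ 0) (g : E → F) :
    ∫ y, g y ∂μ = ∫ z, ((R / dist z c) ^ 2) ^ finrank ℝ E • g (inversion c R z) ∂μ := by
  have hmaps : inversion c R '' {c}ᶜ = {c}ᶜ := by
    rw [(inversion_involutive c hR).image_eq_preimage_symm]
    ext z
    simp [inversion_eq_center hR]
  have hderiv : ∀ z ∈ ({c}ᶜ : Set E), HasFDerivWithinAt (inversion c R)
      ((R / dist z c) ^ 2 • ((ℝ ∙ (z - c))ᗮ.reflection : E →L[ℝ] E)) {c}ᶜ z :=
    fun z hz ↦ (hasFDerivAt_inversion hz).hasFDerivWithinAt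
  have hcov := integral_image_eq_integral_abs_det_fderiv_smul μ
    (measurableSet_singleton c).compl hderiv (inversion_injective c hR).injOn g
  simpa only [hmaps, restrict_compl_singleton, abs_det_fderiv_inversion] using hcov

end ChangeOfVariables

lemma kelvin_weight_eq {lam a b r : ℝ} (hlam : 0 < lam) (ha : 0 < a) (hb : 0 < b) (hr : 0 ≤ r)
    (p : ℝ) (n : ℕ) :
    (a / lam) ^ p * ((lam / b) ^ 2) ^ n * (lam ^ 2 / (a * b) * r) ^ p =
      lam ^ (p + 2 * (n : ℝ)) * r ^ p * b ^ (-(p + 2 * (n : ℝ))) := by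
  have hscale : a / lam * (lam ^ 2 / (a * b) * r) = lam / b * r := by
    field_simp
  calc (a / lam) ^ p * ((lam / b) ^ 2) ^ n * (lam ^ 2 / (a * b) * r) ^ p
      = (lam / b) ^ p * (lam / b) ^ (2 * (n : ℝ)) * r ^ p := by
        rw [mul_right_comm, ← Real.mul_rpow (by positivity) (by positivity), hscale,
          Real.mul_rpow (by positivity) hr, ← pow_mul, ← Real.rpow_natCast]
        push_cast
        ring
    _ = lam ^ (p + 2 * (n : ℝ)) * r ^ p * b ^ (-(p + 2 * (n : ℝ))) := by
        rw [← Real.rpow_add (by positivity), Real.div_rpow hlam.le hb.le, Real.rpow_neg hb.le,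
          div_eq_mul_inv]
        ring

theorem stmt_5_general {n : ℕ} (p : ℝ)
    (f : ℝ → ℝ → ℝ)
    (u : EuclideanSpace ℝ (Fin n) → ℝ)
    (hIE : ∀ x : EuclideanSpace ℝ (Fin n), x ≠ 0 →
      u x = ∫ y : EuclideanSpace ℝ (Fin n), ‖x - y‖ ^ p * f ‖y‖ (u y)) :
    ∀ x : EuclideanSpace ℝ (Fin n), ∀ lam : ℝ, 0 < lam →
      ∀ ξ : EuclideanSpace ℝ (Fin n), ξ ≠ x → inversion x lam ξ ≠ 0 →
        kelvin p u x lam ξ =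
          ∫ z : EuclideanSpace ℝ (Fin n),
            lam ^ (p + 2 * (n : ℝ)) * ‖ξ - z‖ ^ p * ‖z - x‖ ^ (-(p + 2 * (n : ℝ))) *
              f ‖inversion x lam z‖ (u (inversion x lam z)) := by
  intro x lam hlam ξ hξx hξ0
  have : Nontrivial (EuclideanSpace ℝ (Fin n)) := nontrivial_of_ne ξ x hξx
  simp only [kelvin, inversion_eq_euclideanGeometry_inversion] at hξ0 ⊢
  rw [hIE _ hξ0, integral_eq_integral_comp_inversion volume x hlam.ne', ← integral_const_mul]
  refine integral_congr_ae ((volume : Measure (EuclideanSpace ℝ (Fin n))).ae_ne x |>.mono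
    fun z hzx ↦ ?_)
  have hweight := kelvin_weight_eq hlam (dist_pos.2 hξx) (dist_pos.2 hzx)
    (dist_nonneg : 0 ≤ dist ξ z) p n
  simp only [finrank_euclideanSpace_fin, smul_eq_mul, ← dist_eq_norm,
    EuclideanGeometry.dist_inversion_inversion hξx hzx] at hweight ⊢
  rw [← hweight]
  ring

theorem stmt_5 {n : ℕ} (hn : 2 ≤ n) (p : ℝ) (hp : 0 < p)
    (f : ℝ → ℝ → ℝ)
    (hf_cont : ContinuousOn (fun q : ℝ × ℝ => f q.1 q.2) (Set.Ici 0 ×ˢ Set.Ioi 0))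
    (hf_pos : ∀ α : ℝ, 0 ≤ α → ∀ β : ℝ, 0 < β → 0 < f α β)
    (u : EuclideanSpace ℝ (Fin n) → ℝ)
    (hu_pos : ∀ x : EuclideanSpace ℝ (Fin n), x ≠ 0 → 0 < u x)
    (hu_C1 : ContDiffOn ℝ 1 u {(0 : EuclideanSpace ℝ (Fin n))}ᶜ)
    (hIE : ∀ x : EuclideanSpace ℝ (Fin n), x ≠ 0 →
      u x = ∫ y : EuclideanSpace ℝ (Fin n), ‖x - y‖ ^ p * f ‖y‖ (u y)) :
    ∀ x : EuclideanSpace ℝ (Fin n), ∀ lam : ℝ, 0 < lam →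
      ∀ ξ : EuclideanSpace ℝ (Fin n), ξ ≠ x → inversion x lam ξ ≠ 0 →
        kelvin p u x lam ξ =
          ∫ z : EuclideanSpace ℝ (Fin n),
            lam ^ (p + 2 * (n : ℝ)) * ‖ξ - z‖ ^ p * ‖z - x‖ ^ (-(p + 2 * (n : ℝ))) *
              f ‖inversion x lam z‖ (u (inversion x lam z)) :=
  stmt_5_general p f u hIE
end
end

section
/- Let n ≥ 2 be an integer and p > 0. Let f : [0,∞) × (0,∞) → (0,∞) be continuous and let u : ℝⁿ ∖ {0} → ℝ be a positive continuous solution of the integral equation (IE). Then lim_{|y| → ∞} |y|^{−p} u(y) = ∫_{ℝⁿ} f(|z|, u(z)) dz, and this integral is finite and strictly positive. -/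
open MeasureTheory Filter

/-!
Since `u > 0`, each integral `∫ ‖x - z‖ ^ p * g z` with `g z = f ‖z‖ (u z)` is a genuine, convergent
integral (a non-integrable function would have Bochner integral `0`). For `a ≠ b` the weight
`‖a - z‖ ^ p + ‖b - z‖ ^ p` is bounded below, so `g` itself is integrable. For `‖y‖ ≥ 1` the quotient
`(‖y - z‖ / ‖y‖) ^ p` tends to `1` and is dominated by `C (1 + ‖a - z‖ ^ p)`, so dominated convergence
gives the limit. Finally `∫ g = 0` would force `g = 0` a.e., hence `u = 0`.
-/

lemma Real.add_rpow_le_two_rpow_mul_rpow_add_rpow {a b p : ℝ} (ha : 0 ≤ a) (hb : 0 ≤ b)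
    (hp : 0 ≤ p) : (a + b) ^ p ≤ 2 ^ p * (a ^ p + b ^ p) := calc
  (a + b) ^ p ≤ (2 * max a b) ^ p := Real.rpow_le_rpow (add_nonneg ha hb)
    (by rw [two_mul]; exact add_le_add (le_max_left a b) (le_max_right a b)) hp
  _ = 2 ^ p * max a b ^ p := Real.mul_rpow zero_le_two (le_max_of_le_left ha)
  _ ≤ 2 ^ p * (a ^ p + b ^ p) := by
    gcongr
    rcases le_total a b with h | h
    · rw [max_eq_right h]; linarith [Real.rpow_nonneg ha p]
    · rw [max_eq_left h]; linarith [Real.rpow_nonneg hb p]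

lemma tendsto_norm_sub_div_norm_comap_norm_atTop {E : Type*} [NormedAddCommGroup E] (z : E) :
    Tendsto (fun y => ‖y - z‖ / ‖y‖) (comap norm atTop) (nhds 1) := by
  have hnorm : Tendsto (fun y : E => ‖y‖) (comap norm atTop) atTop := tendsto_comap
  rw [tendsto_iff_norm_sub_tendsto_zero]
  refine squeeze_zero' (Eventually.of_forall fun _ => norm_nonneg _) ?_
    ((tendsto_const_nhds (x := ‖z‖)).div_atTop hnorm)
  filter_upwards [hnorm.eventually_gt_atTop 0] with y hy
  rw [Real.norm_eq_abs, div_sub_one hy.ne', abs_div, abs_of_pos hy]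
  gcongr
  simpa using abs_norm_sub_norm_le (y - z) y

section Kernel

variable {E : Type*} [NormedAddCommGroup E] [MeasurableSpace E] [OpensMeasurableSpace E]
  {μ : Measure E} {p : ℝ} {g : E → ℝ}

lemma integrable_of_integrable_rpow_norm_sub_mul {a b : E} (hab : a ≠ b) (hp : 0 ≤ p)
    (ha : Integrable (fun z => ‖a - z‖ ^ p * g z) μ)
    (hb : Integrable (fun z => ‖b - z‖ ^ p * g z) μ) : Integrable g μ := by
  set w : E → ℝ := fun z => ‖a - z‖ ^ p + ‖b - z‖ ^ p
  have hw : ∀ z, ‖a - b‖ ^ p ≤ 2 ^ p * w z := fun z => calc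
    ‖a - b‖ ^ p ≤ (‖a - z‖ + ‖b - z‖) ^ p := by
      gcongr
      simpa only [norm_sub_rev b z] using norm_sub_le_norm_sub_add_norm_sub a z b
    _ ≤ 2 ^ p * w z :=
      Real.add_rpow_le_two_rpow_mul_rpow_add_rpow (norm_nonneg _) (norm_nonneg _) hp
  have hab' : 0 < ‖a - b‖ ^ p := Real.rpow_pos_of_pos (norm_pos_iff.2 (sub_ne_zero.2 hab)) p
  have hw_pos : ∀ z, 0 < w z := fun z =>
    pos_of_mul_pos_right (hab'.trans_le (hw z)) (Real.rpow_nonneg zero_le_two p)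
  have hw_cont : Continuous w := by fun_prop (disch := exact Or.inr hp)
  -- `g = w⁻¹ * (‖a - z‖ ^ p * g + ‖b - z‖ ^ p * g)` with `w⁻¹` bounded, by the triangle inequality.
  refine ((ha.add hb).bdd_mul (c := 2 ^ p / ‖a - b‖ ^ p)
    (f := fun z => (w z)⁻¹)
    (hw_cont.inv₀ fun z => (hw_pos z).ne').aestronglyMeasurable
    (Eventually.of_forall fun z => ?_)).congr (Eventually.of_forall fun z => ?_)
  · rw [norm_inv, Real.norm_of_nonneg (hw_pos z).le, le_div_iff₀ hab', inv_mul_eq_div,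
      div_le_iff₀ (hw_pos z)]
    exact hw z
  · simp only [Pi.add_apply]
    rw [← add_mul, inv_mul_cancel_left₀ (hw_pos z).ne']

lemma tendsto_rpow_neg_mul_integral_rpow_norm_sub_mul {a : E} (hp : 0 ≤ p)
    (hg : Integrable g μ) (ha : Integrable (fun z => ‖a - z‖ ^ p * g z) μ) :
    Tendsto (fun y => ‖y‖ ^ (-p) * ∫ z, ‖y - z‖ ^ p * g z ∂μ) (comap norm atTop)
      (nhds (∫ z, g z ∂μ)) := by
  have hnorm : Tendsto (fun y : E => ‖y‖) (comap norm atTop) atTop := tendsto_comap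
  have h_eq : ∀ y : E, 0 < ‖y‖ →
      ‖y‖ ^ (-p) * ∫ z, ‖y - z‖ ^ p * g z ∂μ = ∫ z, (‖y - z‖ / ‖y‖) ^ p * g z ∂μ := by
    intro y hy
    simp_rw [Real.div_rpow (norm_nonneg _) hy.le, div_eq_inv_mul, ← Real.rpow_neg hy.le,
      mul_assoc, integral_const_mul]
  refine (tendsto_integral_filter_of_dominated_convergence
    (fun z => 2 ^ p * ((1 + ‖a‖) ^ p * ‖g z‖ + ‖‖a - z‖ ^ p * g z‖)) ?_ ?_ ?_ ?_).congr'
    ((hnorm.eventually_gt_atTop 0).mono fun y hy => (h_eq y hy).symm)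
  · refine Eventually.of_forall fun y => ?_
    exact ((((continuous_const.sub continuous_id).norm.div_const _).rpow_const
      fun _ => Or.inr hp).aestronglyMeasurable).mul hg.aestronglyMeasurable
  · filter_upwards [hnorm.eventually_ge_atTop 1] with y hy
    refine Eventually.of_forall fun z => ?_
    have hy0 : 0 < ‖y‖ := zero_lt_one.trans_le hy
    have h_ratio : ‖y - z‖ / ‖y‖ ≤ (1 + ‖a‖) + ‖a - z‖ := by
      rw [div_le_iff₀ hy0]
      calc ‖y - z‖ ≤ ‖y‖ + ‖a‖ + ‖a - z‖ := by
            linarith [norm_sub_le_norm_sub_add_norm_sub y a z, norm_sub_le y a]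
        _ ≤ ((1 + ‖a‖) + ‖a - z‖) * ‖y‖ := by nlinarith [norm_nonneg a, norm_nonneg (a - z)]
    rw [norm_mul, norm_mul (_ ^ p), Real.norm_of_nonneg (Real.rpow_nonneg (by positivity) _),
      Real.norm_of_nonneg (Real.rpow_nonneg (norm_nonneg _) _), ← add_mul, ← mul_assoc]
    gcongr
    calc (‖y - z‖ / ‖y‖) ^ p ≤ ((1 + ‖a‖) + ‖a - z‖) ^ p := by gcongr
      _ ≤ _ := Real.add_rpow_le_two_rpow_mul_rpow_add_rpow (by positivity) (norm_nonneg _) hp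
  · exact ((hg.norm.const_mul _).add ha.norm).const_mul _
  · refine Eventually.of_forall fun z => ?_
    simpa using ((tendsto_norm_sub_div_norm_comap_norm_atTop z).rpow_const
      (Or.inr hp)).mul_const (g z)

theorem integrable_and_tendsto_of_eq_integral_rpow_norm_sub_mul [NormedSpace ℝ E] [Nontrivial E]
    [NullSingletonClass μ] (hp : 0 ≤ p) {u : E → ℝ} (hg : ∀ z, z ≠ 0 → 0 ≤ g z)
    (hu : ∀ x, x ≠ 0 → 0 < u x) (hIE : ∀ x, x ≠ 0 → u x = ∫ z, ‖x - z‖ ^ p * g z ∂μ) :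
    Integrable g μ ∧ 0 < ∫ z, g z ∂μ ∧
      Tendsto (fun y => ‖y‖ ^ (-p) * u y) (comap norm atTop) (nhds (∫ z, g z ∂μ)) := by
  have h_int : ∀ x, x ≠ 0 → Integrable (fun z => ‖x - z‖ ^ p * g z) μ := fun x hx =>
    .of_integral_ne_zero (hIE x hx ▸ (hu x hx).ne')
  obtain ⟨a, ha⟩ := exists_ne (0 : E)
  have ha₂ : (2 : ℝ) • a ≠ 0 := smul_ne_zero two_ne_zero ha
  have hg_int : Integrable g μ :=
    integrable_of_integrable_rpow_norm_sub_mul (by simpa [two_smul] using ha) hp (h_int a ha)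
      (h_int _ ha₂)
  have hg_nonneg : 0 ≤ᵐ[μ] g := (Measure.ae_ne μ 0).mono hg
  have hg_pos : 0 < ∫ z, g z ∂μ := by
    refine (integral_nonneg_of_ae hg_nonneg).lt_of_ne fun h => (hu a ha).ne' ?_
    have hg_zero : g =ᵐ[μ] 0 := (integral_eq_zero_iff_of_nonneg_ae hg_nonneg hg_int).1 h.symm
    rw [hIE a ha]
    exact integral_eq_zero_of_ae (hg_zero.mono fun z hz => by simp [hz])
  refine ⟨hg_int, hg_pos, (tendsto_rpow_neg_mul_integral_rpow_norm_sub_mul hp hg_int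
    (h_int a ha)).congr' ?_⟩
  filter_upwards [(tendsto_comap : Tendsto (‖·‖) (comap norm atTop) atTop).eventually_gt_atTop 0]
    with y hy
  rw [hIE y (norm_pos_iff.1 hy)]

end Kernel

theorem stmt_11_general {n : ℕ} (hn : 2 ≤ n) (p : ℝ) (hp : 0 < p)
    (f : ℝ → ℝ → ℝ)
    (hf_pos : ∀ α : ℝ, 0 ≤ α → ∀ β : ℝ, 0 < β → 0 < f α β)
    (u : EuclideanSpace ℝ (Fin n) → ℝ)
    (hu_pos : ∀ x : EuclideanSpace ℝ (Fin n), x ≠ 0 → 0 < u x)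
    (hIE : ∀ x : EuclideanSpace ℝ (Fin n), x ≠ 0 →
      u x = ∫ y : EuclideanSpace ℝ (Fin n), ‖x - y‖ ^ p * f ‖y‖ (u y)) :
    Integrable (fun z : EuclideanSpace ℝ (Fin n) => f ‖z‖ (u z)) ∧
    (0 < ∫ z : EuclideanSpace ℝ (Fin n), f ‖z‖ (u z)) ∧
    Tendsto (fun y : EuclideanSpace ℝ (Fin n) => ‖y‖ ^ (-p) * u y)
      (comap norm atTop)
      (nhds (∫ z : EuclideanSpace ℝ (Fin n), f ‖z‖ (u z))) := by
  have : Nonempty (Fin n) := ⟨⟨0, by omega⟩⟩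
  exact integrable_and_tendsto_of_eq_integral_rpow_norm_sub_mul hp.le
    (fun z hz => (hf_pos _ (norm_nonneg z) _ (hu_pos z hz)).le) hu_pos hIE

theorem stmt_11 {n : ℕ} (hn : 2 ≤ n) (p : ℝ) (hp : 0 < p)
    (f : ℝ → ℝ → ℝ)
    (hf_cont : ContinuousOn (fun q : ℝ × ℝ => f q.1 q.2) (Set.Ici 0 ×ˢ Set.Ioi 0))
    (hf_pos : ∀ α : ℝ, 0 ≤ α → ∀ β : ℝ, 0 < β → 0 < f α β)
    (u : EuclideanSpace ℝ (Fin n) → ℝ)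
    (hu_pos : ∀ x : EuclideanSpace ℝ (Fin n), x ≠ 0 → 0 < u x)
    (hu_cont : ContinuousOn u {(0 : EuclideanSpace ℝ (Fin n))}ᶜ)
    (hIE : ∀ x : EuclideanSpace ℝ (Fin n), x ≠ 0 →
      u x = ∫ y : EuclideanSpace ℝ (Fin n), ‖x - y‖ ^ p * f ‖y‖ (u y)) :
    Integrable (fun z : EuclideanSpace ℝ (Fin n) => f ‖z‖ (u z)) ∧
    (0 < ∫ z : EuclideanSpace ℝ (Fin n), f ‖z‖ (u z)) ∧
    Tendsto (fun y : EuclideanSpace ℝ (Fin n) => ‖y‖ ^ (-p) * u y)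
      (comap norm atTop)
      (nhds (∫ z : EuclideanSpace ℝ (Fin n), f ‖z‖ (u z))) :=
  stmt_11_general hn p hp f hf_pos u hu_pos hIE
end
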